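/- Let n = 2k+1 with k ≥ 1, so that the bipyramid BP_n is z-knotted and every face of BP_n is a (1,1,2)-face. If k is odd, then every face of BP_n is a (1,1,2)-face of odd type; if k is even, then every face of BP_n is a (1,1,2)-face of even type. -/

import Mathlib

universe u v

/-- The data of an embedded graph: a simple graph together with a collection of
(triangular) faces, each face recorded as the finite set of its vertices. -/
structure PreTriangulation (V : Type u) where
  graph : SimpleGraph V
  faces : Set (Finset V)

namespace PreTriangulation

variable {V : Type u} {V' : Type v}

/-- `T` is a combinatorial triangulation: a finite simple connected graph together with
a collection of faces, each face being a set of three pairwise adjacent vertices, such that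
every edge lies in exactly two faces and two distinct faces share at most one edge. -/
structure IsTriangulation [DecidableEq V] (T : PreTriangulation V) : Prop where
  finiteVerts : Finite V
  connected : T.graph.Connected
  face_card : ∀ F ∈ T.faces, F.card = 3
  face_adj : ∀ F ∈ T.faces, ∀ x ∈ F, ∀ y ∈ F, x ≠ y → T.graph.Adj x y
  edge_in_two_faces : ∀ x y : V, T.graph.Adj x y →
    {F | F ∈ T.faces ∧ x ∈ F ∧ y ∈ F}.ncard = 2
  faces_share_at_most_one_edge :
    ∀ F ∈ T.faces, ∀ G ∈ T.faces, F ≠ G → (F ∩ G).card ≤ 2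

section

variable [DecidableEq V] [DecidableEq V']

/-- A zigzag in `T`: a cyclic sequence of vertices (encoded as a periodic function `ℤ → V`
whose minimal period `n` is the length of the zigzag, with `n > 3`) such that any two
consecutive vertices are distinct and adjacent, any three consecutive vertices lie in a
unique face, and the faces determined by two consecutive triples are distinct. -/
structure Zigzag (T : PreTriangulation V) where
  n : ℕ
  three_lt_n : 3 < n
  seq : ℤ → V
  periodic : ∀ i : ℤ, seq (i + n) = seq i
  n_minimal : ∀ m : ℕ, 0 < m → (∀ i : ℤ, seq (i + m) = seq i) → n ≤ m
  seq_ne : ∀ i : ℤ, seq i ≠ seq (i + 1)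
  seq_adj : ∀ i : ℤ, T.graph.Adj (seq i) (seq (i + 1))
  face : ℤ → Finset V
  face_mem : ∀ i : ℤ, face i ∈ T.faces
  subset_face : ∀ i : ℤ, ({seq i, seq (i + 1), seq (i + 2)} : Finset V) ⊆ face i
  face_unique : ∀ i : ℤ, ∀ G ∈ T.faces,
    ({seq i, seq (i + 1), seq (i + 2)} : Finset V) ⊆ G → G = face i
  face_ne : ∀ i : ℤ, face i ≠ face (i + 1)

variable {T : PreTriangulation V}

/-- Two zigzags are equivalent if they agree up to a cyclic shift or up to a cyclic
shift combined with reversal. -/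
def ZigzagEquiv (Z Z' : T.Zigzag) : Prop :=
  (∃ k : ℤ, ∀ i : ℤ, Z'.seq i = Z.seq (i + k)) ∨
  (∃ k : ℤ, ∀ i : ℤ, Z'.seq i = Z.seq (k - i))

/-- `T` is z-knotted: it has exactly one zigzag up to cyclic shift and reversal. -/
def ZKnotted (T : PreTriangulation V) [DecidableEq V] : Prop :=
  Nonempty T.Zigzag ∧ ∀ Z Z' : T.Zigzag, ZigzagEquiv Z Z'

/-- `T` has exactly two zigzags up to cyclic shift and reversal. -/
def HasExactlyTwoZigzags (T : PreTriangulation V) [DecidableEq V] : Prop :=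
  ∃ Z₁ Z₂ : T.Zigzag, ¬ ZigzagEquiv Z₁ Z₂ ∧
    ∀ Z : T.Zigzag, ZigzagEquiv Z Z₁ ∨ ZigzagEquiv Z Z₂

/-- `T` has exactly three zigzags up to cyclic shift and reversal. -/
def HasExactlyThreeZigzags (T : PreTriangulation V) [DecidableEq V] : Prop :=
  ∃ Z₁ Z₂ Z₃ : T.Zigzag, ¬ ZigzagEquiv Z₁ Z₂ ∧ ¬ ZigzagEquiv Z₁ Z₃ ∧ ¬ ZigzagEquiv Z₂ Z₃ ∧
    ∀ Z : T.Zigzag, ZigzagEquiv Z Z₁ ∨ ZigzagEquiv Z Z₂ ∨ ZigzagEquiv Z Z₃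

namespace Zigzag

/-- The zigzag passes from `x` to `y` (in this order) at some position. -/
def Passes (Z : T.Zigzag) (x y : V) : Prop :=
  ∃ i : ℤ, Z.seq i = x ∧ Z.seq (i + 1) = y

/-- The zigzag passes from `x` to `y` (in this order) at two distinct positions
of the cyclic sequence. -/
def PassesTwice (Z : T.Zigzag) (x y : V) : Prop :=
  ∃ i j : ℤ, (i : ZMod Z.n) ≠ (j : ZMod Z.n) ∧
    Z.seq i = x ∧ Z.seq (i + 1) = y ∧ Z.seq j = x ∧ Z.seq (j + 1) = y

/-- The edge `{x, y}` is of first type: the zigzag contains both `x, y` and `y, x`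
as pairs of consecutive vertices. -/
def FirstTypeEdge (Z : T.Zigzag) (x y : V) : Prop := Z.Passes x y ∧ Z.Passes y x

/-- The edge `{x, y}` is of second type: the zigzag contains the same ordered pair
(`x, y` or `y, x`) twice. -/
def SecondTypeEdge (Z : T.Zigzag) (x y : V) : Prop :=
  Z.PassesTwice x y ∨ Z.PassesTwice y x

/-- The number of positions of the cyclic sequence at which the pair of consecutive
vertices equals `{x, y}` (in either order). -/
noncomputable def passCount (Z : T.Zigzag) (x y : V) : ℕ :=
  Nat.card {i : Fin Z.n //
    (Z.seq ((i : ℕ) : ℤ) = x ∧ Z.seq (((i : ℕ) : ℤ) + 1) = y) ∨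
    (Z.seq ((i : ℕ) : ℤ) = y ∧ Z.seq (((i : ℕ) : ℤ) + 1) = x)}

/-- The number of positions of the cyclic sequence at which the triple of consecutive
vertices has vertex set equal to `F`. -/
noncomputable def faceCount (Z : T.Zigzag) (F : Finset V) : ℕ :=
  Nat.card {i : Fin Z.n //
    ({Z.seq ((i : ℕ) : ℤ), Z.seq (((i : ℕ) : ℤ) + 1), Z.seq (((i : ℕ) : ℤ) + 2)} :
      Finset V) = F}

/-- The three consecutive vertices of the zigzag at position `i` are `x, y, z`. -/
def TripleAt (Z : T.Zigzag) (i : ℤ) (x y z : V) : Prop :=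
  Z.seq i = x ∧ Z.seq (i + 1) = y ∧ Z.seq (i + 2) = z

/-- The zigzag has the cyclic form `x₁,y₁,z₁, …, x₂,y₂,z₂, …, x₃,y₃,z₃, …`:
the three triples occur in this cyclic order within one period. -/
def CyclicTriples (Z : T.Zigzag) (x₁ y₁ z₁ x₂ y₂ z₂ x₃ y₃ z₃ : V) : Prop :=
  ∃ (i : ℤ) (p q : ℕ), 0 < p ∧ p < q ∧ q < Z.n ∧
    Z.TripleAt i x₁ y₁ z₁ ∧ Z.TripleAt (i + p) x₂ y₂ z₂ ∧ Z.TripleAt (i + q) x₃ y₃ z₃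

/-- `F` is a `(1,1,2)`-face: exactly one of its three edges is of second type. -/
def Is112Face (Z : T.Zigzag) (F : Finset V) : Prop :=
  ∃ x y z : V, F = {x, y, z} ∧ x ≠ y ∧ x ≠ z ∧ y ≠ z ∧
    Z.SecondTypeEdge y z ∧ ¬ Z.SecondTypeEdge x y ∧ ¬ Z.SecondTypeEdge x z

/-- `F` is a `(2,2,2)`-face: all three of its edges are of second type. -/
def Is222Face (Z : T.Zigzag) (F : Finset V) : Prop :=
  ∃ x y z : V, F = {x, y, z} ∧ x ≠ y ∧ x ≠ z ∧ y ≠ z ∧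
    Z.SecondTypeEdge x y ∧ Z.SecondTypeEdge y z ∧ Z.SecondTypeEdge x z

/-- `F` is a `(1,1,2)`-face of odd type: with vertices `x, y, z`, where `{y, z}` is the
edge of second type and the zigzag twice passes from `y` to `z`, the zigzag has the
cyclic form `x,y,z, …, y,x,z, …, y,z,x, …`. -/
def Is112OddFace (Z : T.Zigzag) (F : Finset V) : Prop :=
  ∃ x y z : V, F = {x, y, z} ∧ x ≠ y ∧ x ≠ z ∧ y ≠ z ∧
    Z.SecondTypeEdge y z ∧ ¬ Z.SecondTypeEdge x y ∧ ¬ Z.SecondTypeEdge x z ∧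
    Z.PassesTwice y z ∧ Z.CyclicTriples x y z y x z y z x

/-- `F` is a `(1,1,2)`-face of even type: with vertices `x, y, z`, where `{y, z}` is the
edge of second type and the zigzag twice passes from `y` to `z`, the zigzag has the
cyclic form `x,y,z, …, y,z,x, …, y,x,z, …`. -/
def Is112EvenFace (Z : T.Zigzag) (F : Finset V) : Prop :=
  ∃ x y z : V, F = {x, y, z} ∧ x ≠ y ∧ x ≠ z ∧ y ≠ z ∧
    Z.SecondTypeEdge y z ∧ ¬ Z.SecondTypeEdge x y ∧ ¬ Z.SecondTypeEdge x z ∧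
    Z.PassesTwice y z ∧ Z.CyclicTriples x y z y z x y x z

/-- `F` is a `(2,2,2)`-face of first type: with vertices `x, y, z` such that the zigzag
twice passes from `x` to `y`, twice from `y` to `z` and twice from `z` to `x`, the
zigzag has the cyclic form `x,y,z, …, z,x,y, …, y,z,x, …`. -/
def Is222FirstFace (Z : T.Zigzag) (F : Finset V) : Prop :=
  ∃ x y z : V, F = {x, y, z} ∧ x ≠ y ∧ x ≠ z ∧ y ≠ z ∧
    Z.PassesTwice x y ∧ Z.PassesTwice y z ∧ Z.PassesTwice z x ∧
    Z.CyclicTriples x y z z x y y z x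

/-- `F` is a `(2,2,2)`-face of second type: with vertices `x, y, z` such that the zigzag
twice passes from `x` to `y`, twice from `y` to `z` and twice from `z` to `x`, the
zigzag has the cyclic form `x,y,z, …, y,z,x, …, z,x,y, …`. -/
def Is222SecondFace (Z : T.Zigzag) (F : Finset V) : Prop :=
  ∃ x y z : V, F = {x, y, z} ∧ x ≠ y ∧ x ≠ z ∧ y ≠ z ∧
    Z.PassesTwice x y ∧ Z.PassesTwice y z ∧ Z.PassesTwice z x ∧
    Z.CyclicTriples x y z y z x z x y

/-- `a` is the vertex of the face `F` which does not lie on an edge of `F` of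
second type. -/
def IsApex (Z : T.Zigzag) (F : Finset V) (a : V) : Prop :=
  a ∈ F ∧ ∀ y ∈ F, y ≠ a → ¬ Z.SecondTypeEdge a y

end Zigzag

end

section ConnectedSum

variable [DecidableEq V] [DecidableEq V']

/-- The map gluing `Γ'` onto `Γ`: a vertex of `F'` is sent to the corresponding
(under `g`) vertex of `F`, all other vertices of `Γ'` are kept. -/
noncomputable def glueMap [Nonempty V] (F : Finset V) (F' : Finset V') (g : V → V') (y : V') :
    V ⊕ {y : V' // y ∉ F'} :=
  if h : y ∈ F' then Sum.inl (Function.invFunOn g ↑F y) else Sum.inr ⟨y, h⟩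

/-- The connected sum `T #_g T'` of two triangulations along the faces `F` and `F'`,
via the identification `g` of the vertices of `F` with the vertices of `F'`:
the disjoint union of `T` and `T'` in which every vertex `v` of `F` is identified with
`g v` (and the edges of `F` are identified with the corresponding edges of `F'`),
whose faces are all faces of `T` other than `F` together with all faces of `T'`
other than `F'`. -/
noncomputable def connectedSum [Nonempty V] (T : PreTriangulation V) (T' : PreTriangulation V')
    (F : Finset V) (F' : Finset V') (g : V → V') :
    PreTriangulation (V ⊕ {y : V' // y ∉ F'}) where
  graph :=
    { Adj := fun u v => u ≠ v ∧
        ((∃ x y : V, T.graph.Adj x y ∧ u = Sum.inl x ∧ v = Sum.inl y) ∨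
         (∃ x y : V', T'.graph.Adj x y ∧ u = glueMap F F' g x ∧ v = glueMap F F' g y))
      symm := by
        constructor
        rintro u v ⟨hne, h⟩
        refine ⟨hne.symm, ?_⟩
        rcases h with ⟨x, y, hxy, hu, hv⟩ | ⟨x, y, hxy, hu, hv⟩
        · exact Or.inl ⟨y, x, hxy.symm, hv, hu⟩
        · exact Or.inr ⟨y, x, hxy.symm, hv, hu⟩
      loopless := ⟨fun u h => h.1 rfl⟩ }
  faces :=
    {G | (∃ A ∈ T.faces, A ≠ F ∧ G = A.image Sum.inl) ∨
         (∃ A ∈ T'.faces, A ≠ F' ∧ G = A.image (glueMap F F' g))}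

end ConnectedSum

/-- `T` and `T'` are isomorphic as graphs together with their collections of faces. -/
def IsIsoTo [DecidableEq V'] (T : PreTriangulation V) (T' : PreTriangulation V') : Prop :=
  ∃ e : V ≃ V', (∀ x y : V, T.graph.Adj x y ↔ T'.graph.Adj (e x) (e y)) ∧
    (∀ G : Finset V, G ∈ T.faces ↔ G.image e ∈ T'.faces)

/-- The bipyramid `BP n`.  The two apices `a, b` are `Sum.inl true, Sum.inl false`;
the vertices `1, …, n` of the `n`-gon are `Sum.inr 0, …, Sum.inr (n-1)` (that is, the
paper's vertex `i` is `Sum.inr (i - 1)`). -/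
def bp (n : ℕ) : PreTriangulation (Bool ⊕ ZMod n) where
  graph :=
    { Adj := fun u v =>
        match u, v with
        | Sum.inl _, Sum.inl _ => False
        | Sum.inl _, Sum.inr _ => True
        | Sum.inr _, Sum.inl _ => True
        | Sum.inr i, Sum.inr j => i ≠ j ∧ (j = i + 1 ∨ i = j + 1)
      symm := by
        constructor
        rintro (s | i) (t | j) h
        · exact h.elim
        · trivial
        · trivial
        · exact ⟨h.1.symm, h.2.symm⟩
      loopless := by
        constructor
        rintro (s | i) h
        · exact h
        · exact h.1 rfl }
  faces := {G | ∃ (s : Bool) (i : ZMod n), G = {Sum.inl s, Sum.inr i, Sum.inr (i + 1)}}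

/-- The complete graph on four vertices regarded as a combinatorial triangulation whose
faces are all four 3-element vertex subsets. -/
def k4 : PreTriangulation (Fin 4) where
  graph := ⊤
  faces := {G | G.card = 3}

/-- The cyclic sequence `a, 1+c, 2+c, b, 3+c, 4+c, …, a, n-1+c, n+c, b, 1+c, 2+c, a, 3+c, 4+c,
…, b, n-1+c, n+c` in the bipyramid `BP n` (for `n` even), of length `3 n`, written in the
paper's labels; `c` is an offset.  Here `a = Sum.inl true`, `b = Sum.inl false` and the
paper's vertex `i` is `Sum.inr (i - 1)`. -/
def bpZigSeq (n : ℕ) (c : ZMod n) : ℤ → Bool ⊕ ZMod n := fun i =>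
  let j : ℕ := (i % (3 * (n : ℤ))).toNat
  if j % 3 = 0 then Sum.inl (decide (j / 3 % 2 = 0))
  else Sum.inr (((2 * (j / 3) + (if j % 3 = 1 then 0 else 1) : ℕ) : ZMod n) + c)

end PreTriangulation

open PreTriangulation

/-! Every edge of `BP n` lies in exactly two faces, so a zigzag is forced by three consecutive
vertices. For odd `n = 2k + 1` the sequence `a, 1, 2, b, 3, 4, a, 5, 6, …`, run in either
direction `ε = ±1` around the polygon, is such a sequence; it closes up only after `6n` steps,
since the apex in front of the vertex `2m` is `a` or `b` according to the parity of `m`. Hence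
every zigzag is a shift of it, and everything can be read off from positions. An apex–polygon
edge is passed once in each direction. The polygon edge from `u` to `u + ε` is passed twice,
at positions `3m + 1` and `3(m + n) + 1` (where position `3m` is the apex `x` of the face). The
triples `u, apex, u + ε` sit at positions `3(m + k) + 2 + 3nj`, and their apex is `x` exactly
when `k + j` is odd: for odd `k` take `j = 0`, before the second passage, for even `k` take
`j = 1`, after it. -/

namespace ZMod

variable {n : ℕ}

lemma one_ne_zero_of_one_lt (hn : 1 < n) : (1 : ZMod n) ≠ 0 := by
  have : Fact (1 < n) := ⟨hn⟩
  exact one_ne_zero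

lemma two_ne_zero_of_three_le (hn : 3 ≤ n) : (2 : ZMod n) ≠ 0 := by
  have : ((2 : ℕ) : ZMod n) ≠ 0 := by
    rw [Ne, ZMod.natCast_eq_zero_iff]
    exact fun h => absurd (Nat.le_of_dvd two_pos h) (by omega)
  exact_mod_cast this

lemma two_mul_dvd_sub_of_two_mul_eq (hn : Odd n) {a b : ℤ} (hpar : a % 2 = b % 2)
    (h : 2 * (a : ZMod n) = 2 * b) : 2 * (n : ℤ) ∣ a - b := by
  have hcop : IsCoprime (2 : ℤ) n :=
    (Nat.isCoprime_iff_coprime.mpr hn.coprime_two_right).symm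
  have hdvd : (n : ℤ) ∣ (a - b) * 2 := by
    rw [← ZMod.intCast_zmod_eq_zero_iff_dvd]
    push_cast
    linear_combination h
  exact hcop.mul_dvd (by omega) (hcop.symm.dvd_of_dvd_mul_right hdvd)

lemma exists_parity_mul_two_mul_eq (hn : Odd n) {ε : ZMod n} (hu : IsUnit ε) (s : Bool)
    (v : ZMod n) : ∃ m : ℤ, decide (m % 2 = 0) = s ∧ ε * (2 * m) = v := by
  have hshift : ∀ m : ℤ, 2 * ((m + n : ℤ) : ZMod n) = 2 * (m : ZMod n) := by
    intro m
    push_cast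
    simp
  obtain ⟨m, hm⟩ : ∃ m : ℤ, 2 * (m : ZMod n) = ↑hu.unit⁻¹ * v := by
    obtain ⟨k, rfl⟩ := hn
    -- `k + 1` inverts `2` modulo `2k + 1`
    refine ⟨(k + 1) * (↑hu.unit⁻¹ * v).val, ?_⟩
    have hzero : (2 * k + 1 : ZMod (2 * k + 1)) = 0 := by exact_mod_cast ZMod.natCast_self _
    push_cast
    rw [ZMod.natCast_zmod_val]
    linear_combination (↑hu.unit⁻¹ * v) * hzero
  have hv : ε * (↑hu.unit⁻¹ * v) = v := by rw [← mul_assoc, hu.mul_val_inv, one_mul]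
  by_cases hpar : decide (m % 2 = 0) = s
  · exact ⟨m, hpar, by rw [hm, hv]⟩
  · refine ⟨m + n, ?_, by rw [hshift, hm, hv]⟩
    obtain ⟨k, rfl⟩ := hn
    cases s <;> simp_all <;> omega

end ZMod

lemma isUnit_of_eq_one_or_eq_neg_one {R : Type*} [Ring R] {ε : R} (hε : ε = 1 ∨ ε = -1) :
    IsUnit ε := by
  rcases hε with rfl | rfl
  exacts [isUnit_one, isUnit_one.neg]

namespace PreTriangulation

open Sum

section FaceWalk

variable {V : Type*} [DecidableEq V] {T : PreTriangulation V}

def triple (f : ℤ → V) (i : ℤ) : Finset V := {f i, f (i + 1), f (i + 2)}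

def IsFaceWalk (T : PreTriangulation V) (f : ℤ → V) : Prop :=
  ∀ i, triple f i ∈ T.faces ∧ f i ∉ triple f (i + 1)

lemma IsFaceWalk.comp_add_const {f : ℤ → V} (hf : IsFaceWalk T f) (t : ℤ) :
    IsFaceWalk T (fun i => f (i + t)) := by
  intro i
  simpa only [triple, add_right_comm _ t] using hf (i + t)

namespace Zigzag

variable (hT : ∀ x y, T.graph.Adj x y → {F | F ∈ T.faces ∧ x ∈ F ∧ y ∈ F}.ncard = 2)
include hT

lemma seq_add_two_ne (Z : T.Zigzag) (i : ℤ) : Z.seq (i + 2) ≠ Z.seq i := by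
  intro h
  obtain ⟨F, G, hFG, hS⟩ := Set.ncard_eq_two.mp (hT _ _ (Z.seq_adj i))
  have hunique : ∀ H ∈ ({F, G} : Set (Finset V)), H = Z.face i := by
    rintro H hH
    rw [← hS] at hH
    obtain ⟨hH, hi, hi1⟩ := hH
    refine Z.face_unique i H hH ?_
    simp [Finset.insert_subset_iff, h, hi, hi1]
  exact hFG ((hunique F (by simp)).trans (hunique G (by simp)).symm)

lemma eq_face_add_one (Z : T.Zigzag) {i : ℤ} {F : Finset V} (hF : F ∈ T.faces)
    (h1 : Z.seq (i + 1) ∈ F) (h2 : Z.seq (i + 2) ∈ F) (hne : F ≠ Z.face i) :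
    F = Z.face (i + 1) := by
  by_contra hne'
  have hadj := Z.seq_adj (i + 1)
  rw [add_assoc, one_add_one_eq_two] at hadj
  have hsub : ({Z.face i, Z.face (i + 1), F} : Set (Finset V)) ⊆
      {F | F ∈ T.faces ∧ Z.seq (i + 1) ∈ F ∧ Z.seq (i + 2) ∈ F} := by
    have hi := Z.subset_face i
    have hi1 := Z.subset_face (i + 1)
    rw [add_assoc, one_add_one_eq_two] at hi1
    simp only [Finset.insert_subset_iff, Finset.singleton_subset_iff] at hi hi1
    rintro H (rfl | rfl | rfl)
    exacts [⟨Z.face_mem i, hi.2.1, hi.2.2⟩, ⟨Z.face_mem (i + 1), hi1.1, hi1.2.1⟩,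
      ⟨hF, h1, h2⟩]
  have := Set.ncard_le_ncard hsub (Set.finite_of_ncard_ne_zero (by rw [hT _ _ hadj]; simp))
  rw [hT _ _ hadj,
    Set.ncard_eq_three.mpr ⟨_, _, _, Z.face_ne i, Ne.symm hne, Ne.symm hne', rfl⟩] at this
  omega

lemma face_eq_triple (hcard : ∀ F ∈ T.faces, F.card = 3) (Z : T.Zigzag) (i : ℤ) :
    Z.face i = triple Z.seq i := by
  have hne := Z.seq_ne (i + 1)
  rw [add_assoc, one_add_one_eq_two] at hne
  have hcard3 : (triple Z.seq i).card = 3 :=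
    Finset.card_eq_three.mpr ⟨_, _, _, Z.seq_ne i, (Z.seq_add_two_ne hT i).symm, hne, rfl⟩
  exact (Finset.eq_of_subset_of_card_le (Z.subset_face i)
    (by rw [hcard _ (Z.face_mem i), ← hcard3]; rfl)).symm

lemma seq_add_three_eq (Z : T.Zigzag) {f : ℤ → V} (hf : IsFaceWalk T f) {i : ℤ}
    (h0 : Z.seq i = f i) (h1 : Z.seq (i + 1) = f (i + 1)) (h2 : Z.seq (i + 2) = f (i + 2)) :
    Z.seq (i + 3) = f (i + 3) := by
  have hshift : ∀ g : ℤ → V, triple g (i + 1) = {g (i + 1), g (i + 2), g (i + 3)} := by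
    intro g
    simp only [triple, add_assoc]
    norm_num
  have hface : triple f (i + 1) = Z.face (i + 1) := by
    refine Z.eq_face_add_one hT (hf (i + 1)).1 (by simp [hshift, h1]) (by simp [hshift, h2]) ?_
    intro h
    apply (hf i).2
    rw [h, ← h0]
    exact Z.subset_face i (by simp)
  have hmem : Z.seq (i + 3) ∈ triple f (i + 1) := by
    rw [hface]
    exact Z.subset_face (i + 1) (by norm_num [add_assoc])
  have hne1 : Z.seq (i + 3) ≠ Z.seq (i + 1) := by
    simpa [add_assoc] using Z.seq_add_two_ne hT (i + 1)
  have hne2 : Z.seq (i + 3) ≠ Z.seq (i + 2) := by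
    simpa [add_assoc, ne_comm] using Z.seq_ne (i + 2)
  simp only [hshift, Finset.mem_insert, Finset.mem_singleton, ← h1, ← h2] at hmem
  tauto

theorem seq_eq_of_isFaceWalk (Z : T.Zigzag) {f : ℤ → V} (hf : IsFaceWalk T f) {q : ℤ}
    (hq : 0 < q) (hfq : Function.Periodic f q) {j : ℤ} (h0 : Z.seq j = f j)
    (h1 : Z.seq (j + 1) = f (j + 1)) (h2 : Z.seq (j + 2) = f (j + 2)) : Z.seq = f := by
  have hforward : ∀ i ≥ j, Z.seq i = f i ∧ Z.seq (i + 1) = f (i + 1) ∧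
      Z.seq (i + 2) = f (i + 2) := by
    refine Int.leInduction ⟨h0, h1, h2⟩ fun i _ ⟨hi0, hi1, hi2⟩ => ⟨hi1, ?_, ?_⟩
    · rwa [add_assoc, one_add_one_eq_two]
    · have h3 := Z.seq_add_three_eq hT hf hi0 hi1 hi2
      rwa [add_assoc, show (1 : ℤ) + 2 = 3 by norm_num]
  have hZ : Function.Periodic Z.seq (Z.n : ℤ) := Z.periodic
  have hn : (0 : ℤ) < Z.n := by have := Z.three_lt_n; omega
  funext i
  set N := (j - i).toNat
  have hle : j ≤ i + N * (q * Z.n) := by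
    have hN : j - i ≤ N := Int.self_le_toNat (j - i)
    have hqn : 1 ≤ q * Z.n := by nlinarith
    nlinarith [mul_le_mul_of_nonneg_left hqn (Int.natCast_nonneg N)]
  calc Z.seq i = Z.seq (i + N * (q * Z.n)) := ((hZ.int_mul q).int_mul N i).symm
    _ = f (i + N * (q * Z.n)) := (hforward _ hle).1
    _ = f i := by rw [mul_comm q]; exact (hfq.int_mul Z.n).int_mul N i

end Zigzag

end FaceWalk

section Bipyramid

variable {n : ℕ}

lemma insert_mem_faces_bp {ε : ZMod n} (hε : ε = 1 ∨ ε = -1) (s : Bool) (j : ZMod n) :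
    ({inl s, inr j, inr (j + ε)} : Finset (Bool ⊕ ZMod n)) ∈ (bp n).faces := by
  rcases hε with rfl | rfl
  · exact ⟨s, j, rfl⟩
  · refine ⟨s, j - 1, ?_⟩
    ext
    simp only [Finset.mem_insert, Finset.mem_singleton, sub_add_cancel, ← sub_eq_add_neg]
    tauto

lemma exists_eq_of_mem_faces_bp {ε : ZMod n} (hε : ε = 1 ∨ ε = -1)
    {F : Finset (Bool ⊕ ZMod n)} (hF : F ∈ (bp n).faces) :
    ∃ s u, F = {inl s, inr u, inr (u + ε)} := by
  obtain ⟨s, c, rfl⟩ := hF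
  rcases hε with rfl | rfl
  · exact ⟨s, c, rfl⟩
  · refine ⟨s, c + 1, ?_⟩
    ext
    simp only [Finset.mem_insert, Finset.mem_singleton, add_neg_cancel_right]
    tauto

lemma card_of_mem_faces_bp (hn : 1 < n) {F : Finset (Bool ⊕ ZMod n)} (hF : F ∈ (bp n).faces) :
    F.card = 3 := by
  obtain ⟨s, j, rfl⟩ := hF
  refine Finset.card_eq_three.mpr ⟨_, _, _, by simp, by simp, ?_, rfl⟩
  simpa using ZMod.one_ne_zero_of_one_lt hn

lemma faces_bp_inl_inr (s : Bool) (p : ZMod n) :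
    {F | F ∈ (bp n).faces ∧ inl s ∈ F ∧ inr p ∈ F} =
      {{inl s, inr (p - 1), inr (p - 1 + 1)}, {inl s, inr p, inr (p + 1)}} := by
  ext F
  constructor
  · rintro ⟨⟨s', j, rfl⟩, hs, hp⟩
    simp only [Finset.mem_insert, Finset.mem_singleton, inl.injEq, inr.injEq, reduceCtorEq,
      or_false, false_or] at hs hp
    subst hs
    rcases hp with rfl | rfl
    · exact Or.inr rfl
    · simp
  · rintro (rfl | rfl) <;> exact ⟨⟨_, _, rfl⟩, by simp, by simp⟩

lemma faces_bp_inr_inr (hn : 3 ≤ n) (p : ZMod n) :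
    {F | F ∈ (bp n).faces ∧ inr p ∈ F ∧ inr (p + 1) ∈ F} =
      {{inl true, inr p, inr (p + 1)}, {inl false, inr p, inr (p + 1)}} := by
  have h1 := ZMod.one_ne_zero_of_one_lt (n := n) (by omega)
  have h2 := ZMod.two_ne_zero_of_three_le hn
  ext F
  constructor
  · rintro ⟨⟨s, j, rfl⟩, hp, hp1⟩
    simp only [Finset.mem_insert, Finset.mem_singleton, inr.injEq, reduceCtorEq,
      false_or] at hp hp1
    have hj : j = p := by
      rcases hp with rfl | rfl <;> rcases hp1 with h | h
      · exact (h1 (by linear_combination h)).elim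
      · rfl
      · exact (h2 (by linear_combination h)).elim
      · exact (h1 (by linear_combination h)).elim
    subst hj
    cases s <;> simp
  · rintro (rfl | rfl) <;> exact ⟨⟨_, _, rfl⟩, by simp, by simp⟩

lemma ncard_faces_bp_of_adj (hn : 3 ≤ n) (x y : Bool ⊕ ZMod n) (hxy : (bp n).graph.Adj x y) :
    {F | F ∈ (bp n).faces ∧ x ∈ F ∧ y ∈ F}.ncard = 2 := by
  have hinl : ∀ s p, {F | F ∈ (bp n).faces ∧ inl s ∈ F ∧ inr p ∈ F}.ncard = 2 := by
    intro s p
    have h1 := ZMod.one_ne_zero_of_one_lt (n := n) (by omega)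
    have h2 := ZMod.two_ne_zero_of_three_le hn
    rw [faces_bp_inl_inr]
    refine Set.ncard_pair fun h => ?_
    have : inr (p + 1) ∈ ({inl s, inr (p - 1), inr (p - 1 + 1)} : Finset (Bool ⊕ ZMod n)) := by
      rw [h]; simp
    simp only [Finset.mem_insert, Finset.mem_singleton, inr.injEq, reduceCtorEq, false_or,
      sub_add_cancel] at this
    rcases this with h | h
    · exact h2 (by linear_combination h)
    · exact h1 (by linear_combination h)
  have hinr : ∀ p, {F | F ∈ (bp n).faces ∧ inr p ∈ F ∧ inr (p + 1) ∈ F}.ncard = 2 := by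
    intro p
    rw [faces_bp_inr_inr hn]
    exact Set.ncard_pair fun h => by simpa using Finset.ext_iff.mp h (inl true)
  have hswap : ∀ u v : Bool ⊕ ZMod n, {F | F ∈ (bp n).faces ∧ u ∈ F ∧ v ∈ F} =
      {F | F ∈ (bp n).faces ∧ v ∈ F ∧ u ∈ F} := fun u v => by
    ext; exact and_congr_right fun _ => and_comm
  rcases x with s | p <;> rcases y with t | q
  · exact hxy.elim
  · exact hinl s q
  · rw [hswap]; exact hinl t p
  · obtain ⟨-, rfl | rfl⟩ := hxy
    · exact hinr p
    · rw [hswap]; exact hinr q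

/-- The zigzag `a, 1, 2, b, 3, 4, a, 5, 6, …` of `BP n`, run in the direction `ε = ±1` around
the polygon. -/
def bpZig (ε : ZMod n) (i : ℤ) : Bool ⊕ ZMod n :=
  if i % 3 = 0 then inl (decide (i / 3 % 2 = 0))
  else if i % 3 = 1 then inr (ε * (2 * ((i / 3 : ℤ) : ZMod n)))
  else inr (ε * (2 * ((i / 3 : ℤ) : ZMod n) + 1))

section

variable (ε : ZMod n) (m : ℤ)

lemma bpZig_three_mul : bpZig ε (3 * m) = inl (decide (m % 2 = 0)) := by
  simp [bpZig]

lemma bpZig_three_mul_add_one : bpZig ε (3 * m + 1) = inr (ε * (2 * m)) := by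
  simp [bpZig, Int.add_ediv_of_dvd_left]

lemma bpZig_three_mul_add_two : bpZig ε (3 * m + 2) = inr (ε * (2 * m + 1)) := by
  simp [bpZig, Int.add_ediv_of_dvd_left]

lemma bpZig_three_mul_sub_one : bpZig ε (3 * m - 1) = inr (ε * (2 * m - 1)) := by
  rw [show 3 * m - 1 = 3 * (m - 1) + 2 by ring, bpZig_three_mul_add_two]
  push_cast
  ring_nf

theorem isFaceWalk_bpZig (hn : 3 ≤ n) (hε : ε = 1 ∨ ε = -1) :
    IsFaceWalk (bp n) (bpZig ε) := by
  have h1 := ZMod.one_ne_zero_of_one_lt (n := n) (by omega)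
  have h2 := ZMod.two_ne_zero_of_three_le hn
  have hu := isUnit_of_eq_one_or_eq_neg_one hε
  have hface := insert_mem_faces_bp hε
  intro i
  obtain ⟨m, rfl | rfl | rfl⟩ : ∃ m, i = 3 * m ∨ i = 3 * m + 1 ∨ i = 3 * m + 2 :=
    ⟨i / 3, by omega⟩
  · refine ⟨?_, by simp [triple, bpZig, Int.add_ediv_of_dvd_left, add_assoc]; omega⟩
    rw [triple, bpZig_three_mul, bpZig_three_mul_add_one, bpZig_three_mul_add_two]
    convert hface _ (ε * (2 * m)) using 5
    ring
  · refine ⟨?_, by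
      simp [triple, bpZig, Int.add_ediv_of_dvd_left, add_assoc, hu.mul_right_inj]
      exact ⟨h1, fun h => h2 (by linear_combination -h)⟩⟩
    rw [triple, show 3 * m + 1 + 1 = 3 * m + 2 by ring, show 3 * m + 1 + 2 = 3 * (m + 1) by ring,
      bpZig_three_mul_add_one, bpZig_three_mul_add_two, bpZig_three_mul, Finset.pair_comm,
      Finset.insert_comm]
    convert hface _ (ε * (2 * m)) using 5
    ring
  · refine ⟨?_, by
      simp [triple, bpZig, Int.add_ediv_of_dvd_left, add_assoc, hu.mul_right_inj]
      exact ⟨fun h => h1 (by linear_combination -h), fun h => h2 (by linear_combination -h)⟩⟩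
    rw [triple, show 3 * m + 2 + 1 = 3 * (m + 1) by ring,
      show 3 * m + 2 + 2 = 3 * (m + 1) + 1 by ring, bpZig_three_mul_add_two, bpZig_three_mul,
      bpZig_three_mul_add_one, Finset.insert_comm]
    convert hface _ (ε * (2 * m + 1)) using 5
    push_cast
    ring

lemma bpZig_periodic : Function.Periodic (bpZig ε) (6 * n) := by
  intro i
  obtain ⟨m, rfl | rfl | rfl⟩ : ∃ m, i = 3 * m ∨ i = 3 * m + 1 ∨ i = 3 * m + 2 :=
    ⟨i / 3, by omega⟩
  · rw [show 3 * m + 6 * (n : ℤ) = 3 * (m + 2 * n) by ring, bpZig_three_mul, bpZig_three_mul]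
    simp only [inl.injEq, decide_eq_decide]
    omega
  · rw [show 3 * m + 1 + 6 * (n : ℤ) = 3 * (m + 2 * n) + 1 by ring, bpZig_three_mul_add_one,
      bpZig_three_mul_add_one]
    push_cast
    simp
  · rw [show 3 * m + 2 + 6 * (n : ℤ) = 3 * (m + 2 * n) + 2 by ring, bpZig_three_mul_add_two,
      bpZig_three_mul_add_two]
    push_cast
    simp

end

variable {ε : ZMod n}

lemma exists_eq_three_mul_of_bpZig_eq_inl {i : ℤ} {s : Bool} (h : bpZig ε i = inl s) :
    ∃ m, i = 3 * m ∧ decide (m % 2 = 0) = s := by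
  refine ⟨i / 3, ?_⟩
  unfold bpZig at h
  split_ifs at h with h0
  · exact ⟨by omega, inl.inj h⟩

lemma six_mul_dvd_sub_of_bpZig_eq (hn : Odd n) (hu : IsUnit ε) {a b d : ℤ} {s : Bool}
    (hd : d = 1 ∨ d = -1) (ha : bpZig ε a = inl s) (hb : bpZig ε b = inl s)
    (had : bpZig ε (a + d) = bpZig ε (b + d)) : 6 * (n : ℤ) ∣ a - b := by
  obtain ⟨ma, rfl, hsa⟩ := exists_eq_three_mul_of_bpZig_eq_inl ha
  obtain ⟨mb, rfl, hsb⟩ := exists_eq_three_mul_of_bpZig_eq_inl hb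
  have hpar : ma % 2 = mb % 2 := by
    rw [← hsb, decide_eq_decide] at hsa
    omega
  have h2 : 2 * (ma : ZMod n) = 2 * mb := by
    rcases hd with rfl | rfl
    · rwa [bpZig_three_mul_add_one, bpZig_three_mul_add_one, inr.injEq, hu.mul_right_inj] at had
    · rwa [← sub_eq_add_neg, ← sub_eq_add_neg, bpZig_three_mul_sub_one,
        bpZig_three_mul_sub_one, inr.injEq, hu.mul_right_inj, sub_left_inj] at had
  obtain ⟨c, hc⟩ := ZMod.two_mul_dvd_sub_of_two_mul_eq hn hpar h2
  exact ⟨c, by rw [← mul_sub, hc]; ring⟩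

lemma Zigzag.n_eq_of_seq_eq_bpZig (hn : Odd n) (hu : IsUnit ε)
    {T : PreTriangulation (Bool ⊕ ZMod n)} (Z : T.Zigzag) {t : ℤ}
    (hZ : ∀ i, Z.seq i = bpZig ε (i + t)) : Z.n = 6 * n := by
  have hperiodic : Function.Periodic (bpZig ε) Z.n := fun i => by
    simpa [hZ, sub_add_cancel, add_right_comm] using Z.periodic (i - t)
  have hdvd : 6 * (n : ℤ) ∣ Z.n - 0 := by
    refine six_mul_dvd_sub_of_bpZig_eq hn hu (Or.inl rfl) (s := true) ?_ ?_ ?_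
    · rw [hperiodic.eq]
      simpa using bpZig_three_mul ε 0
    · simpa using bpZig_three_mul ε 0
    · rw [add_comm, hperiodic, zero_add]
  have hle := Int.le_of_dvd (by have := Z.three_lt_n; omega) hdvd
  refine le_antisymm (Z.n_minimal _ (by have := hn.pos; omega) fun i => ?_) (by omega)
  rw [hZ, hZ, add_right_comm]
  exact_mod_cast bpZig_periodic ε (i + t)

theorem Zigzag.exists_seq_eq_bpZig (hn : Odd n) (hn3 : 3 ≤ n) (Z : (bp n).Zigzag) :
    ∃ ε t, (ε = 1 ∨ ε = -1) ∧ ∀ i, Z.seq i = bpZig ε (i + t) := by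
  have hT := ncard_faces_bp_of_adj hn3
  have htriple := Z.face_eq_triple hT fun _ => card_of_mem_faces_bp (by omega)
  obtain ⟨i, s, hi⟩ : ∃ i s, Z.seq i = inl s := by
    obtain ⟨s, j, hF⟩ := Z.face_mem 0
    have : inl s ∈ triple Z.seq 0 := by rw [← htriple, hF]; simp
    simp only [triple, Finset.mem_insert, Finset.mem_singleton] at this
    rcases this with h | h | h <;> exact ⟨_, s, h.symm⟩
  obtain ⟨p, hp⟩ : ∃ p, Z.seq (i + 1) = inr p := by
    have hadj := Z.seq_adj i
    rw [hi] at hadj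
    cases h : Z.seq (i + 1) with
    | inl _ => rw [h] at hadj; exact hadj.elim
    | inr p => exact ⟨p, rfl⟩
  obtain ⟨q, hq⟩ : ∃ q, Z.seq (i + 2) = inr q := by
    cases h : Z.seq (i + 2) with
    | inr q => exact ⟨q, rfl⟩
    | inl s' =>
      -- a face contains only one apex
      exfalso
      obtain ⟨s₀, j, hF⟩ := Z.face_mem i
      have hs : inl s ∈ Z.face i := by rw [htriple, triple, hi]; simp
      have hs' : inl s' ∈ Z.face i := by rw [htriple, triple, h]; simp
      rw [hF] at hs hs'
      simp only [Finset.mem_insert, Finset.mem_singleton, inl.injEq, reduceCtorEq,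
        or_false] at hs hs'
      exact Z.seq_add_two_ne hT i (by rw [h, hi, hs, hs'])
  obtain ⟨ε, hε, rfl⟩ : ∃ ε : ZMod n, (ε = 1 ∨ ε = -1) ∧ q = p + ε := by
    have hadj := Z.seq_adj (i + 1)
    rw [hp, add_assoc, one_add_one_eq_two, hq] at hadj
    obtain ⟨-, rfl | rfl⟩ := hadj
    exacts [⟨1, Or.inl rfl, rfl⟩, ⟨-1, Or.inr rfl, by ring⟩]
  obtain ⟨m, hms, hmp⟩ :=
    ZMod.exists_parity_mul_two_mul_eq hn (isUnit_of_eq_one_or_eq_neg_one hε) s p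
  refine ⟨ε, 3 * m - i, hε, congrFun (Z.seq_eq_of_isFaceWalk hT
    ((isFaceWalk_bpZig ε hn3 hε).comp_add_const _) (by have := hn.pos; omega)
    ((bpZig_periodic ε).add_const _) (j := i) ?_ ?_ ?_)⟩
  · rw [hi, show i + (3 * m - i) = 3 * m by ring, bpZig_three_mul, hms]
  · rw [hp, show i + 1 + (3 * m - i) = 3 * m + 1 by ring, bpZig_three_mul_add_one, hmp]
  · rw [hq, show i + 2 + (3 * m - i) = 3 * m + 2 by ring, bpZig_three_mul_add_two, mul_add_one,
      hmp]

end Bipyramid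

namespace Zigzag

variable {n k : ℕ} {ε : ZMod n} {T : PreTriangulation (Bool ⊕ ZMod n)} {Z : T.Zigzag} {t : ℤ}

section TripleAt

variable (hZ : ∀ i, Z.seq i = bpZig ε (i + t))
include hZ

lemma tripleAt_of_three_mul {i m : ℤ} (hi : i + t = 3 * m) :
    Z.TripleAt i (inl (decide (m % 2 = 0))) (inr (ε * (2 * m))) (inr (ε * (2 * m + 1))) := by
  refine ⟨?_, ?_, ?_⟩
  · rw [hZ, hi, bpZig_three_mul]
  · rw [hZ, add_right_comm, hi, bpZig_three_mul_add_one]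
  · rw [hZ, add_right_comm, hi, bpZig_three_mul_add_two]

lemma tripleAt_of_three_mul_add_one {i m : ℤ} (hi : i + t = 3 * m + 1) :
    Z.TripleAt i (inr (ε * (2 * m))) (inr (ε * (2 * m + 1)))
      (inl (decide ((m + 1) % 2 = 0))) := by
  refine ⟨?_, ?_, ?_⟩
  · rw [hZ, hi, bpZig_three_mul_add_one]
  · rw [hZ, add_right_comm, hi, add_assoc, one_add_one_eq_two, bpZig_three_mul_add_two]
  · rw [hZ, add_right_comm, hi, show 3 * m + 1 + 2 = 3 * (m + 1) by ring, bpZig_three_mul]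

lemma tripleAt_of_three_mul_add_two {i m : ℤ} (hi : i + t = 3 * m + 2) :
    Z.TripleAt i (inr (ε * (2 * m + 1))) (inl (decide ((m + 1) % 2 = 0)))
      (inr (ε * (2 * (m + 1)))) := by
  refine ⟨?_, ?_, ?_⟩
  · rw [hZ, hi, bpZig_three_mul_add_two]
  · rw [hZ, add_right_comm, hi, show 3 * m + 2 + 1 = 3 * (m + 1) by ring, bpZig_three_mul]
  · rw [hZ, add_right_comm, hi, show 3 * m + 2 + 2 = 3 * (m + 1) + 1 by ring,
      bpZig_three_mul_add_one]
    push_cast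
    rfl

end TripleAt

section Face

variable (hn : Odd n) (hu : IsUnit ε) (hZ : ∀ i, Z.seq i = bpZig ε (i + t))
include hn hu hZ

lemma passesTwice_inr_inr_of_bpZig (u : ZMod n) : Z.PassesTwice (inr u) (inr (u + ε)) := by
  obtain ⟨m, -, hm⟩ := ZMod.exists_parity_mul_two_mul_eq hn hu true u
  have hZn := Z.n_eq_of_seq_eq_bpZig hn hu hZ
  have h₁ := tripleAt_of_three_mul_add_one hZ (i := 3 * m + 1 - t) (m := m) (by ring)
  have h₂ := tripleAt_of_three_mul_add_one hZ (i := 3 * (m + n) + 1 - t) (m := m + n) (by ring)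
  simp only [Int.cast_add, Int.cast_natCast, ZMod.natCast_self, add_zero] at h₂
  rw [mul_add_one, hm] at h₁ h₂
  refine ⟨_, _, ?_, h₁.1, h₁.2.1, h₂.1, h₂.2.1⟩
  rw [Ne, ZMod.intCast_eq_intCast_iff_dvd_sub, hZn, show 3 * (m + n) + 1 - t - (3 * m + 1 - t) =
    3 * n by ring]
  intro h
  have := Int.le_of_dvd (by have := hn.pos; omega) h
  have := hn.pos
  omega

lemma not_secondTypeEdge_inl_inr_of_bpZig (s : Bool) (v : ZMod n) :
    ¬ Z.SecondTypeEdge (inl s) (inr v) := by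
  have hZn := Z.n_eq_of_seq_eq_bpZig hn hu hZ
  have key : ∀ {i j d : ℤ}, d = 1 ∨ d = -1 → Z.seq i = inl s → Z.seq j = inl s →
      Z.seq (i + d) = Z.seq (j + d) → (i : ZMod Z.n) = j := by
    intro i j d hd hi hj hijd
    rw [hZ] at hi hj hijd
    rw [hZ, add_right_comm, add_right_comm j] at hijd
    rw [ZMod.intCast_eq_intCast_iff_dvd_sub, hZn]
    push_cast
    simpa using six_mul_dvd_sub_of_bpZig_eq hn hu hd hj hi hijd.symm
  rintro (⟨i, j, hij, hi, hi1, hj, hj1⟩ | ⟨i, j, hij, hi, hi1, hj, hj1⟩)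
  · exact hij (key (Or.inl rfl) hi hj (hi1.trans hj1.symm))
  · have := key (Or.inr rfl) hi1 hj1 (by simpa using hi.trans hj.symm)
    push_cast at this
    exact hij (add_right_cancel this)

end Face

section Cyclic

variable (hk : n = 2 * k + 1) (hu : IsUnit ε) (hZ : ∀ i, Z.seq i = bpZig ε (i + t))
include hk hu hZ

lemma cyclicTriples_of_bpZig_of_odd (hodd : Odd k) (s : Bool) (u : ZMod n) :
    Z.CyclicTriples (inl s) (inr u) (inr (u + ε)) (inr u) (inl s) (inr (u + ε))
      (inr u) (inr (u + ε)) (inl s) := by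
  subst hk
  have hn := odd_two_mul_add_one k
  obtain ⟨m, hms, hmu⟩ := ZMod.exists_parity_mul_two_mul_eq hn hu s u
  have hZn := Z.n_eq_of_seq_eq_bpZig hn hu hZ
  have hzero : (2 * k + 1 : ZMod (2 * k + 1)) = 0 := by exact_mod_cast ZMod.natCast_self _
  have hk2 := Nat.odd_iff.mp hodd
  refine ⟨3 * m - t, 3 * k + 2, 3 * (2 * k + 1) + 1, by omega, by omega, by rw [hZn]; omega,
    ?_, ?_, ?_⟩
  · convert tripleAt_of_three_mul hZ (i := 3 * m - t) (m := m) (by ring) using 2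
    · exact hms.symm
    · exact hmu.symm
    · rw [mul_add_one, hmu]
  · convert tripleAt_of_three_mul_add_two hZ (i := 3 * m - t + ↑(3 * k + 2)) (m := m + k)
      (by push_cast; ring) using 2
    · push_cast; linear_combination -hmu - ε * hzero
    · rw [← hms, decide_eq_decide]; omega
    · push_cast; linear_combination -hmu - ε * hzero
  · convert tripleAt_of_three_mul_add_one hZ (i := 3 * m - t + ↑(3 * (2 * k + 1) + 1))
      (m := m + (2 * k + 1)) (by push_cast; ring) using 2
    · push_cast; linear_combination -hmu - 2 * ε * hzero
    · push_cast; linear_combination -hmu - 2 * ε * hzero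
    · rw [← hms, decide_eq_decide]; omega

lemma cyclicTriples_of_bpZig_of_even (heven : Even k) (s : Bool) (u : ZMod n) :
    Z.CyclicTriples (inl s) (inr u) (inr (u + ε)) (inr u) (inr (u + ε)) (inl s)
      (inr u) (inl s) (inr (u + ε)) := by
  subst hk
  have hn := odd_two_mul_add_one k
  obtain ⟨m, hms, hmu⟩ := ZMod.exists_parity_mul_two_mul_eq hn hu s u
  have hZn := Z.n_eq_of_seq_eq_bpZig hn hu hZ
  have hzero : (2 * k + 1 : ZMod (2 * k + 1)) = 0 := by exact_mod_cast ZMod.natCast_self _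
  have hk2 := Nat.even_iff.mp heven
  refine ⟨3 * m - t, 3 * (2 * k + 1) + 1, 3 * k + 3 * (2 * k + 1) + 2, by omega, by omega,
    by rw [hZn]; omega, ?_, ?_, ?_⟩
  · convert tripleAt_of_three_mul hZ (i := 3 * m - t) (m := m) (by ring) using 2
    · exact hms.symm
    · exact hmu.symm
    · rw [mul_add_one, hmu]
  · convert tripleAt_of_three_mul_add_one hZ (i := 3 * m - t + ↑(3 * (2 * k + 1) + 1))
      (m := m + (2 * k + 1)) (by push_cast; ring) using 2
    · push_cast; linear_combination -hmu - 2 * ε * hzero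
    · push_cast; linear_combination -hmu - 2 * ε * hzero
    · rw [← hms, decide_eq_decide]; omega
  · convert tripleAt_of_three_mul_add_two hZ (i := 3 * m - t + ↑(3 * k + 3 * (2 * k + 1) + 2))
      (m := m + k + (2 * k + 1)) (by push_cast; ring) using 2
    · push_cast; linear_combination -hmu - 3 * ε * hzero
    · rw [← hms, decide_eq_decide]; omega
    · push_cast; linear_combination -hmu - 3 * ε * hzero

end Cyclic

lemma is112Face_of_bpZig (hk : n = 2 * k + 1) (hk1 : 1 ≤ k) (hε : ε = 1 ∨ ε = -1)
    (hZ : ∀ i, Z.seq i = bpZig ε (i + t)) (s : Bool) (u : ZMod n) :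
    (Odd k → Z.Is112OddFace {inl s, inr u, inr (u + ε)}) ∧
      (Even k → Z.Is112EvenFace {inl s, inr u, inr (u + ε)}) := by
  have hn : Odd n := hk ▸ odd_two_mul_add_one k
  have hu := isUnit_of_eq_one_or_eq_neg_one hε
  have hpass := passesTwice_inr_inr_of_bpZig hn hu hZ u
  have hapex := not_secondTypeEdge_inl_inr_of_bpZig hn hu hZ s
  have hne : (inr u : Bool ⊕ ZMod n) ≠ inr (u + ε) := by
    rcases hε with rfl | rfl <;> simp [ZMod.one_ne_zero_of_one_lt (n := n) (by omega)]
  exact ⟨fun hodd => ⟨_, _, _, rfl, by simp, by simp, hne, Or.inl hpass, hapex u,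
      hapex (u + ε), hpass, cyclicTriples_of_bpZig_of_odd hk hu hZ hodd s u⟩,
    fun heven => ⟨_, _, _, rfl, by simp, by simp, hne, Or.inl hpass, hapex u,
      hapex (u + ε), hpass, cyclicTriples_of_bpZig_of_even hk hu hZ heven s u⟩⟩

end Zigzag

end PreTriangulation

theorem statement_7 (k : ℕ) (hk : 1 ≤ k) :
    (Odd k → ∀ Z : (bp (2 * k + 1)).Zigzag,
      ∀ F ∈ (bp (2 * k + 1)).faces, Z.Is112OddFace F) ∧
    (Even k → ∀ Z : (bp (2 * k + 1)).Zigzag,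
      ∀ F ∈ (bp (2 * k + 1)).faces, Z.Is112EvenFace F) := by
  have hn : Odd (2 * k + 1) := odd_two_mul_add_one k
  refine ⟨fun hodd Z F hF => ?_, fun heven Z F hF => ?_⟩ <;>
    obtain ⟨ε, t, hε, hZ⟩ := Z.exists_seq_eq_bpZig hn (by omega) <;>
    obtain ⟨s, u, rfl⟩ := exists_eq_of_mem_faces_bp hε hF
  · exact (Z.is112Face_of_bpZig rfl hk hε hZ s u).1 hodd
  · exact (Z.is112Face_of_bpZig rfl hk hε hZ s u).2 heven
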